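/- Let p be a probability mass function on a countable set W, let δ > 0, and let W_δ = {w ∈ W : p(w) ≥ δ}. Define ξ = ∑_{w ∈ W_δ} p(w) and η = ∑_{w ∈ W_δ} p(w)². If η > 0, then H₂(p) ≤ Ĥ₂(p) ≤ H₂(p) + log(1 + (1-ξ)·δ/η), where H₂(p) = -log ∑_{w ∈ W} p(w)² and Ĥ₂(p) = -log ∑_{w ∈ W_δ} p(w)². -/

import Mathlib

/-!
Split `∑ p(w)²` into the part over `W_δ`, which is `η`, and the tail over `{p < δ}`. The tail is
nonnegative, and since `p(w)² ≤ δ p(w)` there it is at most `δ` times the tail mass `1 - ξ`. Hence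
`η ≤ ∑ p(w)² ≤ η + (1 - ξ) δ`, and taking `-log` gives both inequalities.
-/

section Truncation

variable {W : Type*} {p : W → ℝ} {δ : ℝ}

lemma tsum_sq_below_le_mul_tsum (hp : ∀ w, 0 ≤ p w) (hsummable : Summable p)
    (hsq : Summable fun w => p w ^ 2) :
    ∑' w : {w // ¬δ ≤ p w}, p w.val ^ 2 ≤ δ * ∑' w : {w // ¬δ ≤ p w}, p w.val := by
  rw [← tsum_mul_left]
  refine (hsq.subtype _).tsum_le_tsum (fun w => ?_) ((hsummable.subtype _).mul_left δ)
  rw [sq]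
  exact mul_le_mul_of_nonneg_right (not_le.mp w.2).le (hp w)

lemma tsum_sq_le_truncated_add (hp : ∀ w, 0 ≤ p w) (hsummable : Summable p)
    (hsum : ∑' w, p w = 1) (hsq : Summable fun w => p w ^ 2) :
    ∑' w, p w ^ 2 ≤
      ∑' w : {w // δ ≤ p w}, p w.val ^ 2 + (1 - ∑' w : {w // δ ≤ p w}, p w.val) * δ := by
  have htail_mass : ∑' w : {w // ¬δ ≤ p w}, p w.val = 1 - ∑' w : {w // δ ≤ p w}, p w.val := by
    rw [← hsum, ← (hsummable.subtype {w | δ ≤ p w}).tsum_add_tsum_compl (hsummable.subtype _)]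
    exact (add_sub_cancel_left _ _).symm
  calc ∑' w, p w ^ 2
      = ∑' w : {w // δ ≤ p w}, p w.val ^ 2 + ∑' w : {w // ¬δ ≤ p w}, p w.val ^ 2 :=
        ((hsq.subtype {w | δ ≤ p w}).tsum_add_tsum_compl (hsq.subtype _)).symm
    _ ≤ ∑' w : {w // δ ≤ p w}, p w.val ^ 2 + δ * ∑' w : {w // ¬δ ≤ p w}, p w.val := by
      gcongr; exact tsum_sq_below_le_mul_tsum hp hsummable hsq
    _ = _ := by rw [htail_mass, mul_comm]

end Truncation

lemma Real.neg_log_le_neg_log_add_log_one_add_div {η S c : ℝ} (hη : 0 < η) (hηS : η ≤ S)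
    (hS : S ≤ η + c) : -Real.log η ≤ -Real.log S + Real.log (1 + c / η) := by
  have hlog : Real.log S ≤ Real.log (η + c) := Real.log_le_log (hη.trans_le hηS) hS
  rw [one_add_div hη.ne', Real.log_div (by linarith) hη.ne']
  linarith

theorem renyi_truncation_bound_general {W : Type*} (p : W → ℝ)
    (hp : ∀ w, 0 ≤ p w) (hsummable : Summable p) (hsum : ∑' w, p w = 1)
    (hsq : Summable (fun w => (p w) ^ 2))
    (δ : ℝ)
    (ξ η H2 H2hat : ℝ)
    (hξ : ξ = ∑' w : {w // δ ≤ p w}, p w.val)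
    (hη : η = ∑' w : {w // δ ≤ p w}, (p w.val) ^ 2)
    (hηpos : 0 < η)
    (hH2 : H2 = - Real.log (∑' w, (p w) ^ 2))
    (hH2hat : H2hat = - Real.log (∑' w : {w // δ ≤ p w}, (p w.val) ^ 2)) :
    H2 ≤ H2hat ∧ H2hat ≤ H2 + Real.log (1 + (1 - ξ) * δ / η) := by
  rw [hH2, hH2hat, ← hη]
  have hη_le : η ≤ ∑' w, p w ^ 2 :=
    hη ▸ hsq.tsum_subtype_le _ {w | δ ≤ p w} fun w => sq_nonneg (p w)
  have hle_add : ∑' w, p w ^ 2 ≤ η + (1 - ξ) * δ :=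
    hη ▸ hξ ▸ tsum_sq_le_truncated_add hp hsummable hsum hsq
  exact ⟨neg_le_neg (Real.log_le_log hηpos hη_le),
    Real.neg_log_le_neg_log_add_log_one_add_div hηpos hη_le hle_add⟩

theorem renyi_truncation_bound {W : Type*} [Countable W] (p : W → ℝ)
    (hp : ∀ w, 0 ≤ p w) (hsummable : Summable p) (hsum : ∑' w, p w = 1)
    (hsq : Summable (fun w => (p w) ^ 2))
    (δ : ℝ) (hδ : 0 < δ)
    (ξ η H2 H2hat : ℝ)
    (hξ : ξ = ∑' w : {w // δ ≤ p w}, p w.val)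
    (hη : η = ∑' w : {w // δ ≤ p w}, (p w.val) ^ 2)
    (hηpos : 0 < η)
    (hH2 : H2 = - Real.log (∑' w, (p w) ^ 2))
    (hH2hat : H2hat = - Real.log (∑' w : {w // δ ≤ p w}, (p w.val) ^ 2)) :
    H2 ≤ H2hat ∧ H2hat ≤ H2 + Real.log (1 + (1 - ξ) * δ / η) :=
  renyi_truncation_bound_general p hp hsummable hsum hsq δ ξ η H2 H2hat hξ hη hηpos hH2 hH2hat
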